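/- For an infinite cardinal α, an ideal I on an arc-connected space X, and any two points a, b ∈ X, the subgroups 𝔓ᵅ_I(X,a) ≤ π₁(X,a) and 𝔓ᵅ_I(X,b) ≤ π₁(X,b) generated by homotopy classes of α-I-loops are isomorphic; an isomorphism is given by [g] ↦ [f̄ * g * f], where f : [0,1] → X is a continuous injective path from a to b. -/

import Mathlib

/-- `I` is an ideal on `X`. -/
def IsIdealOn {X : Type*} (I : Set (Set X)) : Prop :=
  I.Nonempty ∧ (∀ A ∈ I, ∀ B ∈ I, A ∪ B ∈ I) ∧ (∀ A ∈ I, ∀ B, B ⊆ A → B ∈ I)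

/-- The homotopy class of a loop, as an element of the fundamental group. -/
noncomputable def loopClass {X : Type*} [TopologicalSpace X] {a : X} (f : Path a a) :
    FundamentalGroup X a :=
  @FundamentalGroup.fromPath X _ a ⟦f⟧

/-- The subgroup `𝔓ᵅ_I(X, a)` of `π₁(X, a)` generated by homotopy classes of α-I-loops
based at `a`. -/
noncomputable def POmega {X : Type*} [TopologicalSpace X] (α : Cardinal) (I : Set (Set X))
    (a : X) : Subgroup (FundamentalGroup X a) :=
  Subgroup.closure {p | ∃ f : Path a a,
    (∃ A ∈ I, ∀ x ∉ A, Cardinal.mk ((⇑f) ⁻¹' {x}) < α) ∧ loopClass f = p}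

/-!
Conjugating a loop `g` by an arc `f` adds to each fibre at most two points, one on each copy
of `f`. For infinite `α` the fibres of `f̄ * g * f` are small wherever those of
`g` are, so conjugation by `f` — an isomorphism `π₁(X,a) ≃* π₁(X,b)` with inverse conjugation
by `f̄` — maps the generators of `𝔓ᵅ_I(X,a)` into those of `𝔓ᵅ_I(X,b)` and back.
-/

open Cardinal Function

namespace Path

variable {X : Type*} [TopologicalSpace X] {a b c : X}

theorem mk_preimage_trans_le (p : Path a b) (q : Path b c) (x : X) :
    #((p.trans q) ⁻¹' {x}) ≤ #(p ⁻¹' {x}) + #(q ⁻¹' {x}) := by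
  let half : unitInterval → unitInterval := fun u =>
    ⟨(u : ℝ) / 2, by constructor <;> nlinarith [u.2.1, u.2.2]⟩
  let halfUp : unitInterval → unitInterval := fun u =>
    ⟨((u : ℝ) + 1) / 2, by constructor <;> nlinarith [u.2.1, u.2.2]⟩
  have hsub : (p.trans q) ⁻¹' {x} ⊆ half '' (p ⁻¹' {x}) ∪ halfUp '' (q ⁻¹' {x}) := by
    intro t ht
    simp only [Set.mem_preimage, Set.mem_singleton_iff, Path.trans_apply] at ht
    split_ifs at ht
    · exact Or.inl ⟨_, ht, Subtype.ext (by simp only [half]; ring)⟩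
    · exact Or.inr ⟨_, ht, Subtype.ext (by simp only [halfUp]; ring)⟩
  calc #((p.trans q) ⁻¹' {x})
      ≤ #(half '' (p ⁻¹' {x}) ∪ halfUp '' (q ⁻¹' {x}) : Set unitInterval) := mk_le_mk_of_subset hsub
    _ ≤ #(half '' (p ⁻¹' {x})) + #(halfUp '' (q ⁻¹' {x})) := mk_union_le _ _
    _ ≤ #(p ⁻¹' {x}) + #(q ⁻¹' {x}) := add_le_add mk_image_le mk_image_le

theorem mk_preimage_le_one_of_injective {p : Path a b} (hp : Injective p) (x : X) :
    #(p ⁻¹' {x}) ≤ 1 :=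
  Set.Subsingleton.cardinalMk_le_one fun _ hu _ hv => hp (hu.trans hv.symm)

theorem injective_symm {p : Path a b} (hp : Injective p) : Injective p.symm :=
  hp.comp unitInterval.symm_involutive.injective

/-- The paper's α-I-condition, for paths with arbitrary endpoints. -/
def IsAlphaIPath (α : Cardinal) (I : Set (Set X)) (γ : Path a b) : Prop :=
  ∃ A ∈ I, ∀ x ∉ A, #(γ ⁻¹' {x}) < α

theorem IsAlphaIPath.conj {α : Cardinal} (hα : ℵ₀ ≤ α) {I : Set (Set X)} {f : Path a b}
    (hf : Injective f) {g : Path a a} (hg : g.IsAlphaIPath α I) :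
    ((f.symm.trans g).trans f).IsAlphaIPath α I := by
  obtain ⟨A, hA, hgA⟩ := hg
  have hone : (1 : Cardinal) < α := one_lt_aleph0.trans_le hα
  refine ⟨A, hA, fun x hx => ?_⟩
  calc #(((f.symm.trans g).trans f) ⁻¹' {x})
      ≤ #(f.symm ⁻¹' {x}) + #(g ⁻¹' {x}) + #(f ⁻¹' {x}) :=
        (mk_preimage_trans_le _ _ x).trans (add_le_add_left (mk_preimage_trans_le _ _ x) _)
    _ < α := add_lt_of_lt hα
        (add_lt_of_lt hα ((mk_preimage_le_one_of_injective (injective_symm hf) x).trans_lt hone)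
          (hgA x hx))
        ((mk_preimage_le_one_of_injective hf x).trans_lt hone)

end Path

section FundamentalGroup

open CategoryTheory FundamentalGroup

variable {X : Type*} [TopologicalSpace X] {a b : X}

theorem fundamentalGroupMulEquivOfPath_loopClass (f : Path a b) (g : Path a a) :
    fundamentalGroupMulEquivOfPath f (loopClass g) = loopClass ((f.symm.trans g).trans f) := by
  delta fundamentalGroupMulEquivOfPath
  rw [Iso.conj_apply, ← Category.assoc]
  rfl

theorem fundamentalGroupMulEquivOfPath_symm_loopClass (f : Path a b) (g : Path b b) :
    (fundamentalGroupMulEquivOfPath f).symm (loopClass g) =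
      loopClass ((f.trans g).trans f.symm) := by
  let := Path.Homotopic.setoid (X := X)
  delta fundamentalGroupMulEquivOfPath
  change (⟦f⟧ : FundamentalGroupoid.mk a ⟶ FundamentalGroupoid.mk b) ≫ loopClass g ≫
    Groupoid.inv (⟦f⟧ : FundamentalGroupoid.mk a ⟶ FundamentalGroupoid.mk b) = _
  refine (Category.assoc _ _ _).symm.trans ?_
  rfl

theorem map_POmega_le {α : Cardinal} (hα : ℵ₀ ≤ α) (I : Set (Set X)) {f : Path a b}
    (hf : Injective f) {φ : FundamentalGroup X a →* FundamentalGroup X b}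
    (hφ : ∀ g, φ (loopClass g) = loopClass ((f.symm.trans g).trans f)) :
    (POmega α I a).map φ ≤ POmega α I b := by
  rw [POmega, MonoidHom.map_closure, Subgroup.closure_le]
  rintro _ ⟨_, ⟨g, hg, rfl⟩, rfl⟩
  exact Subgroup.subset_closure ⟨_, Path.IsAlphaIPath.conj hα hf hg, (hφ g).symm⟩

theorem map_POmega_fundamentalGroupMulEquivOfPath {α : Cardinal} (hα : ℵ₀ ≤ α)
    (I : Set (Set X)) {f : Path a b} (hf : Injective f) :
    (POmega α I a).map (fundamentalGroupMulEquivOfPath f).toMonoidHom = POmega α I b := by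
  refine le_antisymm (map_POmega_le hα I hf (fundamentalGroupMulEquivOfPath_loopClass f)) ?_
  rw [Subgroup.map_equiv_eq_comap_symm', ← Subgroup.map_le_iff_le_comap]
  exact map_POmega_le hα I (Path.injective_symm hf)
    fun g => by rw [Path.symm_symm]; exact fundamentalGroupMulEquivOfPath_symm_loopClass f g

end FundamentalGroup

theorem stmt3_general {X : Type*} [TopologicalSpace X] (α : Cardinal) (hα : Cardinal.aleph0 ≤ α)
    (I : Set (Set X))
    (a b : X) (f : Path a b) (hf : Function.Injective f) :
    ∃ e : POmega α I a ≃* POmega α I b,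
      ∀ (g : Path a a) (hg : loopClass g ∈ POmega α I a),
        (e ⟨loopClass g, hg⟩ : FundamentalGroup X b) =
          loopClass ((f.symm.trans g).trans f) := by
  let φ := FundamentalGroup.fundamentalGroupMulEquivOfPath f
  refine ⟨(φ.subgroupMap (POmega α I a)).trans
    (MulEquiv.subgroupCongr (map_POmega_fundamentalGroupMulEquivOfPath hα I hf)), fun g hg => ?_⟩
  exact fundamentalGroupMulEquivOfPath_loopClass f g

/-- For an infinite cardinal `α`, an ideal `I` on an arc-connected space `X`, and points
`a, b ∈ X`, the subgroups `𝔓ᵅ_I(X,a)` and `𝔓ᵅ_I(X,b)` are isomorphic, via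
`[g] ↦ [f̄ * g * f]` for a continuous injective path `f` from `a` to `b`. -/
theorem stmt3 {X : Type*} [TopologicalSpace X] (α : Cardinal) (hα : Cardinal.aleph0 ≤ α)
    (I : Set (Set X)) (hI : IsIdealOn I)
    (harc : ∀ p q : X, p ≠ q → ∃ γ : Path p q, Function.Injective γ)
    (a b : X) (f : Path a b) (hf : Function.Injective f) :
    ∃ e : POmega α I a ≃* POmega α I b,
      ∀ (g : Path a a) (hg : loopClass g ∈ POmega α I a),
        (e ⟨loopClass g, hg⟩ : FundamentalGroup X b) =
          loopClass ((f.symm.trans g).trans f) :=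
  stmt3_general α hα I a b f hf
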